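/- arXiv:2305.04806 — 5 statements merged into one kernel-verified Lean document; each statement's English description precedes it below -/
import Mathlib

section
/- Let n and r be non-negative integers with n − r odd. If every non-trivial element of A_{n−r} is covered by the one-part partition (n−r)¹ of n−r, then every non-trivial element of A_n having at least r fixed points is covered by the one-part partition n¹ of n. -/
open Equiv Pointwise

/-- `g ∈ A_n` is covered by the one-part partition `n¹` if whenever `C` and `D` are
`A_n`-conjugacy classes consisting of `n`-cycles, one has `g ∈ C * D`; equivalently,
for all `n`-cycles `x, y ∈ A_n` there are `A_n`-conjugates `c` of `x` and `d` of `y`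
with `g = c * d`. -/
def CoveredByNCycles (n : ℕ) (g : alternatingGroup (Fin n)) : Prop :=
  ∀ x y : alternatingGroup (Fin n),
    (↑x : Equiv.Perm (Fin n)).IsCycle → (↑x : Equiv.Perm (Fin n)).support.card = n →
    (↑y : Equiv.Perm (Fin n)).IsCycle → (↑y : Equiv.Perm (Fin n)).support.card = n →
    ∃ c d : alternatingGroup (Fin n), IsConj x c ∧ IsConj y d ∧ g = c * d

/-!
Write `m = n - r`. Conjugating inside `A_n`, we may assume that `g` fixes the last `r` points,
so that `g = E h` for some `1 ≠ h ∈ A_m`, where `E : Perm (Fin m) → Perm (Fin n)` extends by the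
identity. The `n`-cycle `finRotate n` factors as `E u * t` with `u = finRotate m` and `t` fixing
the first `m` points except `m - 1`. A factorisation `h = c * d` into `m`-cycles then gives
`g = (E c * t) * (t⁻¹ * E d)`, a product of two `n`-cycles. Their `A_n`-classes can be prescribed:
any conjugator of `u` may be replaced by one of the same sign fixing `m - 1` (multiply by a power
of the even cycle it produces), and the image of such a conjugator under `E` commutes with `t`.
-/

open Finset

theorem IsConj.inv {G : Type*} [Group G] {a b : G} (h : IsConj a b) : IsConj a⁻¹ b⁻¹ := by
  obtain ⟨c, rfl⟩ := isConj_iff.mp h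
  exact isConj_iff.mpr ⟨c, by group⟩

namespace Equiv.Perm

variable {α β : Type*}

section Fintype

variable [Fintype α] [DecidableEq α]

theorem isConj_inv_self (σ : Perm α) : IsConj σ⁻¹ σ :=
  isConj_iff_cycleType_eq.mpr (cycleType_inv σ)

theorem card_fixed_add_two_le {f : Perm α} (hf : f ≠ 1) :
    (univ.filter fun i => f i = i).card + 2 ≤ Fintype.card α := by
  have hsplit := card_filter_add_card_filter_not (s := univ) (fun i => f i = i)
  have : 2 ≤ (univ.filter fun i => ¬ f i = i).card := two_le_card_support_of_ne_one hf
  rw [card_univ] at hsplit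
  omega

theorem IsCycle.exists_conj_eq_fixing {u : Perm α} (hu : u.IsCycle) (hsupp : u.support = univ)
    (hsign : Perm.sign u = 1) (σ : Perm α) (a : α) :
    ∃ z : Perm α, z a = a ∧ Perm.sign z = Perm.sign σ ∧ z * u * z⁻¹ = σ * u * σ⁻¹ := by
  set w := σ * u * σ⁻¹
  have hmoves : ∀ b, w b ≠ b := fun b => by
    rw [← mem_support, support_conj, hsupp, map_univ_equiv]; exact mem_univ b
  obtain ⟨k, hk⟩ := hu.conj.exists_zpow_eq (hmoves a) (hmoves (σ a))
  refine ⟨(w ^ k)⁻¹ * σ, ?_, ?_, ?_⟩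
  · rw [mul_apply, ← hk]; exact (w ^ k).symm_apply_apply a
  · simp [w, hsign]
  · calc (w ^ k)⁻¹ * σ * u * ((w ^ k)⁻¹ * σ)⁻¹ = (w ^ k)⁻¹ * (w * w ^ k) := by
          simp only [w, mul_inv_rev, inv_inv, mul_assoc]
      _ = w := by rw [(Commute.self_zpow w k).eq, inv_mul_cancel_left]

end Fintype

section ExtendDomain

variable {p : β → Prop} [DecidablePred p] (e : α ≃ Subtype p)

theorem exists_extendDomain_eq {f : Perm β} (hf : ∀ b, ¬ p b → f b = b) :
    ∃ h : Perm α, h.extendDomain e = f := by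
  have hp : ∀ b, p (f b) ↔ p b := fun b => by
    refine ⟨fun hfb => ?_, fun hb => ?_⟩
    · by_contra hb; rw [hf b hb] at hfb; exact hb hfb
    · by_contra hfb; exact hfb ((f.injective (hf _ hfb)).symm ▸ hb)
  refine ⟨e.permCongr.symm (f.subtypePerm hp), ?_⟩
  ext b
  by_cases hb : p b
  · simp [extendDomain_apply_subtype _ _ hb, permCongr]
  · rw [extendDomain_apply_not_subtype _ _ hb, hf b hb]

theorem disjoint_extendDomain_of_fixes {z : Perm α} {a : α} (hz : z a = a) {t : Perm β}
    (ht : ∀ b, p b → b ≠ e a → t b = b) : Disjoint (z.extendDomain e) t := by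
  intro b
  by_cases hb : p b
  · by_cases hba : b = e a
    · left; rw [hba, extendDomain_apply_image, hz]
    · exact Or.inr (ht b hb hba)
  · exact Or.inl (extendDomain_apply_not_subtype z e hb)

variable [Fintype α] [DecidableEq α] [Fintype β] [DecidableEq β]

theorem exists_alternatingGroup_extendDomain_eq {g : alternatingGroup β}
    (hg : ∀ b, ¬ p b → (g : Perm β) b = b) :
    ∃ h : alternatingGroup α, (g : Perm β) = (h : Perm α).extendDomain e := by
  obtain ⟨h, hh⟩ := exists_extendDomain_eq e hg
  refine ⟨⟨h, ?_⟩, hh.symm⟩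
  rw [mem_alternatingGroup, ← sign_extendDomain h e, hh]
  exact g.2

theorem exists_isConj_extendDomain_mul {u : Perm α} (hu : u.IsCycle) (hsupp : u.support = univ)
    (hsign : Perm.sign u = 1) {t : Perm β} {a : α} (ht : ∀ b, p b → b ≠ e a → t b = b)
    (x : alternatingGroup β) (hx : IsConj (x : Perm β) (u.extendDomain e * t)) :
    ∃ x' : alternatingGroup α, IsConj (x' : Perm α) u ∧ ∀ c : alternatingGroup α, IsConj x' c →
      ∃ c' : alternatingGroup β, (c' : Perm β) = (c : Perm α).extendDomain e * t ∧ IsConj x c' := by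
  obtain ⟨σ, hσ⟩ := isConj_iff.mp hx
  have ht_sign : Perm.sign t = 1 := by
    have hx_sign := congrArg Perm.sign hσ
    simpa [sign_extendDomain, hsign, mem_alternatingGroup.mp x.2] using hx_sign.symm
  have : Nontrivial α := by
    obtain ⟨b, hb, -⟩ := hu
    exact nontrivial_of_ne _ _ hb
  -- `τ` has the sign of `σ`, which makes the `A_α`-class of `τ * u * τ⁻¹` match that of `x`.
  obtain ⟨τ, hτ⟩ := sign_surjective α (Perm.sign σ)
  refine ⟨⟨τ * u * τ⁻¹, by simp [mem_alternatingGroup, hsign]⟩,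
    isConj_iff.mpr ⟨τ⁻¹, by group⟩, ?_⟩
  intro c hc
  obtain ⟨γ, rfl⟩ := isConj_iff.mp hc
  obtain ⟨z, hza, hz_sign, hz⟩ := hu.exists_conj_eq_fixing hsupp hsign ((γ : Perm α) * τ) a
  set E := extendDomainHom e
  have hcomm : Commute (E z) t := (disjoint_extendDomain_of_fixes e hza ht).commute
  refine ⟨⟨_, by simp [mem_alternatingGroup, sign_extendDomain, ht_sign, hsign,
    mem_alternatingGroup.mp γ.2]⟩, rfl,
    isConj_iff.mpr ⟨⟨z.extendDomain e * σ, ?_⟩, Subtype.ext ?_⟩⟩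
  · simp [mem_alternatingGroup, sign_extendDomain, hz_sign, mem_alternatingGroup.mp γ.2, hτ]
  · simp only [Subgroup.coe_mul, Subgroup.coe_inv]
    change E z * σ * x * (E z * σ)⁻¹ = E (γ * (τ * u * τ⁻¹) * γ⁻¹) * t
    replace hσ : σ * x * σ⁻¹ = E u * t := hσ
    calc E z * σ * x * (E z * σ)⁻¹ = E z * (σ * x * σ⁻¹) * (E z)⁻¹ := by group
      _ = E (z * u * z⁻¹) * (E z * t * (E z)⁻¹) := by rw [hσ]; simp only [map_mul, map_inv]; group
      _ = E (γ * (τ * u * τ⁻¹) * γ⁻¹) * t := by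
        rw [hcomm.eq, mul_inv_cancel_right, hz, Subgroup.coe_inv]; group

end ExtendDomain

end Equiv.Perm

namespace alternatingGroup

variable {α : Type*} [Fintype α] [DecidableEq α]

theorem exists_smul_finset_eq {s t : Finset α} (hst : s.card = t.card)
    (hα : s.card + 2 ≤ Fintype.card α) : ∃ q : alternatingGroup α, q • s = t := by
  have := isMultiplyPretransitive α
  have := MulAction.isMultiplyPretransitive_of_le (G := alternatingGroup α) (α := α)
    (m := s.card) (n := Nat.card α - 2) (by rw [Nat.card_eq_fintype_card]; omega) (Nat.sub_le _ _)
  obtain ⟨q, hq⟩ := (Set.powersetCard.isPretransitive_of_isMultiplyPretransitive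
    (alternatingGroup α) this).exists_smul_eq (⟨s, rfl⟩ : Set.powersetCard α s.card) ⟨t, hst.symm⟩
  exact ⟨q, congrArg Subtype.val hq⟩

theorem exists_isConj_forall_mem_apply_eq (g : alternatingGroup α) {s : Finset α}
    (hs : s.card ≤ (univ.filter fun i => (g : Perm α) i = i).card)
    (hα : s.card + 2 ≤ Fintype.card α) :
    ∃ g' : alternatingGroup α, IsConj g g' ∧ ∀ i ∈ s, (g' : Perm α) i = i := by
  obtain ⟨T, hT, hT_card⟩ := Finset.exists_subset_card_eq hs
  obtain ⟨q, rfl⟩ := exists_smul_finset_eq hT_card (hT_card ▸ hα)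
  refine ⟨q * g * q⁻¹, isConj_iff.mpr ⟨q, rfl⟩, fun i hi => ?_⟩
  obtain ⟨j, hj, rfl⟩ := Finset.mem_smul_finset.mp hi
  have hgj : (g : Perm α) j = j := (Finset.mem_filter.mp (hT hj)).2
  simp [Subgroup.smul_def, Perm.smul_def, hgj]

end alternatingGroup

def CoveredByConjClass {α : Type*} [Fintype α] [DecidableEq α] (u : Perm α)
    (g : alternatingGroup α) : Prop :=
  ∀ x y : alternatingGroup α, IsConj (x : Perm α) u → IsConj (y : Perm α) u →
    ∃ c d : alternatingGroup α, IsConj x c ∧ IsConj y d ∧ g = c * d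

namespace CoveredByConjClass

open Equiv.Perm

variable {α β : Type*} [Fintype α] [DecidableEq α] [Fintype β] [DecidableEq β]

theorem of_isConj {u : Perm α} {g g' : alternatingGroup α} (hg : CoveredByConjClass u g)
    (hgg' : IsConj g g') : CoveredByConjClass u g' := by
  obtain ⟨k, rfl⟩ := isConj_iff.mp hgg'
  intro x y hx hy
  obtain ⟨c, d, hc, hd, rfl⟩ := hg x y hx hy
  exact ⟨k * c * k⁻¹, k * d * k⁻¹, hc.trans (isConj_iff.mpr ⟨k, rfl⟩),
    hd.trans (isConj_iff.mpr ⟨k, rfl⟩), by group⟩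

theorem extendDomain_mul {p : β → Prop} [DecidablePred p] (e : α ≃ Subtype p)
    {u : Perm α} (hu : u.IsCycle) (hsupp : u.support = univ) (hsign : Perm.sign u = 1)
    {t : Perm β} {a : α} (ht : ∀ b, p b → b ≠ e a → t b = b) {h : alternatingGroup α}
    (hh : CoveredByConjClass u h) {g : alternatingGroup β}
    (hg : (g : Perm β) = (h : Perm α).extendDomain e) :
    CoveredByConjClass (u.extendDomain e * t) g := by
  intro x y hx hy
  -- The second factor comes from the construction applied to `y⁻¹`, as
  -- `t⁻¹ * d.extendDomain e = (d⁻¹.extendDomain e * t)⁻¹`.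
  have hy_inv : IsConj ((y⁻¹ : alternatingGroup β) : Perm β) (u.extendDomain e * t) := by
    rw [Subgroup.coe_inv]; exact hy.inv.trans (isConj_inv_self _)
  obtain ⟨x', hx'u, hx'⟩ := exists_isConj_extendDomain_mul e hu hsupp hsign ht x hx
  obtain ⟨y', hy'u, hy'⟩ := exists_isConj_extendDomain_mul e hu hsupp hsign ht y⁻¹ hy_inv
  obtain ⟨c, d, hc, hd, rfl⟩ :=
    hh x' y'⁻¹ hx'u (by rw [Subgroup.coe_inv]; exact hy'u.inv.trans (isConj_inv_self u))
  obtain ⟨c', hc'_eq, hc'⟩ := hx' c hc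
  obtain ⟨d', hd'_eq, hd'⟩ := hy' d⁻¹ (by simpa using hd.inv)
  refine ⟨c', d'⁻¹, hc', by simpa using hd'.inv, Subtype.ext ?_⟩
  simp only [hg, Subgroup.coe_mul, Subgroup.coe_inv, hc'_eq, hd'_eq, mul_inv_rev,
    ← extendDomain_inv, inv_inv, mul_assoc, mul_inv_cancel_left]
  exact (Perm.extendDomain_mul e _ _).symm

end CoveredByConjClass

theorem Fin.card_filter_not_val_lt (n m : ℕ) :
    (univ.filter fun i : Fin n => ¬ (i : ℕ) < m).card = n - m := by
  have := card_filter_add_card_filter_not (s := univ) (p := fun i : Fin n => (i : ℕ) < m)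
  rw [Fin.card_filter_val_lt, card_univ, Fintype.card_fin] at this
  omega

theorem coe_finRotate_of_add_one_lt {n : ℕ} {i : Fin n} (h : (i : ℕ) + 1 < n) :
    (finRotate n i : ℕ) = i + 1 := by
  obtain ⟨n, rfl⟩ : ∃ k, n = k + 1 := ⟨n - 1, by omega⟩
  exact coe_finRotate_of_ne_last (Fin.ne_of_val_ne (by rw [Fin.val_last]; omega))

theorem extendDomain_finRotate_castLEquiv_apply {m n : ℕ} (hmn : m ≤ n) {i : Fin n}
    (hi : (i : ℕ) + 1 < m) :
    (finRotate m).extendDomain (Fin.castLEquiv hmn) i = finRotate n i := by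
  rw [Perm.extendDomain_apply_subtype _ (Fin.castLEquiv hmn) (b := i) (by omega)]
  ext
  simp only [Fin.castLEquiv_apply, Fin.castLEquiv_symm_apply, Fin.val_castLE]
  rw [coe_finRotate_of_add_one_lt hi, coe_finRotate_of_add_one_lt (by omega)]

theorem Equiv.Perm.isConj_finRotate_iff {n : ℕ} (hn : 2 ≤ n) (x : Perm (Fin n)) :
    IsConj x (finRotate n) ↔ x.IsCycle ∧ x.support.card = n := by
  rw [isConj_iff_cycleType_eq, cycleType_finRotate_of_le hn]
  refine ⟨fun h => ⟨card_cycleType_eq_one.mp (by simp [h]), ?_⟩, fun ⟨hc, hs⟩ => by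
    rw [hc.cycleType, hs]⟩
  rw [← sum_cycleType, h, Multiset.sum_singleton]

theorem coveredByNCycles_iff {n : ℕ} (hn : 2 ≤ n) (g : alternatingGroup (Fin n)) :
    CoveredByNCycles n g ↔ CoveredByConjClass (finRotate n) g := by
  simp only [CoveredByNCycles, CoveredByConjClass, Perm.isConj_finRotate_iff hn, and_imp]

theorem CoveredByConjClass.finRotate_extendDomain_castLEquiv {m n : ℕ} (hmn : m ≤ n)
    (hm : Odd m) (hm2 : 2 ≤ m) {h : alternatingGroup (Fin m)}
    (hh : CoveredByConjClass (finRotate m) h) {g : alternatingGroup (Fin n)}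
    (hg : (g : Perm (Fin n)) = (h : Perm (Fin m)).extendDomain (Fin.castLEquiv hmn)) :
    CoveredByConjClass (finRotate n) g := by
  set u := (finRotate m).extendDomain (Fin.castLEquiv hmn)
  rw [← mul_inv_cancel_left u (finRotate n)]
  refine hh.extendDomain_mul _ (isCycle_finRotate_of_le hm2) (support_finRotate_of_le hm2) ?_
    (a := ⟨m - 1, by omega⟩) ?_ hg
  · rw [sign_finRotate, (Nat.Odd.sub_odd hm odd_one).neg_one_pow]
  · intro b hb hba
    have hb_ne : (b : ℕ) ≠ m - 1 := fun h => hba (Fin.ext (by simp [h]))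
    rw [Perm.mul_apply, Perm.inv_eq_iff_eq, extendDomain_finRotate_castLEquiv_apply hmn (by omega)]

theorem partial_cancellation_cycle_general (n r : ℕ) (hodd : Odd (n - r))
    (hcov : ∀ h : alternatingGroup (Fin (n - r)), h ≠ 1 → CoveredByNCycles (n - r) h) :
    ∀ g : alternatingGroup (Fin n), g ≠ 1 →
      r ≤ (Finset.univ.filter fun i => (↑g : Equiv.Perm (Fin n)) i = i).card →
      CoveredByNCycles n g := by
  intro g hg hfix
  have hmn : n - r ≤ n := Nat.sub_le n r
  have hm2 : 2 ≤ n - r := by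
    have := Perm.card_fixed_add_two_le (fun h => hg (Subtype.ext h))
    rw [Fintype.card_fin] at this
    omega
  obtain ⟨g', hgg', hg'_fix⟩ := alternatingGroup.exists_isConj_forall_mem_apply_eq g
    (s := univ.filter fun i : Fin n => ¬ (i : ℕ) < n - r)
    (by rwa [Fin.card_filter_not_val_lt, Nat.sub_sub_self (by omega)])
    (by rw [Fin.card_filter_not_val_lt, Fintype.card_fin]; omega)
  obtain ⟨h, hh⟩ := Perm.exists_alternatingGroup_extendDomain_eq (Fin.castLEquiv hmn)
    (fun b hb => hg'_fix b (mem_filter.mpr ⟨mem_univ b, hb⟩))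
  have h_ne : h ≠ 1 := by
    rintro rfl
    have hg' : g' = 1 := Subtype.ext (by simpa using hh)
    exact hg (isConj_one_left.mp (hg' ▸ hgg'))
  rw [coveredByNCycles_iff (by omega)]
  exact (((coveredByNCycles_iff hm2 h).mp (hcov h h_ne)).finRotate_extendDomain_castLEquiv hmn
    hodd hm2 hh).of_isConj hgg'.symm

/-- **Partial cancellation for long cycles.**
Let `n - r` be odd.  If every non-trivial element of `A_{n-r}` is covered by the one-part
partition `(n-r)¹`, then every non-trivial element of `A_n` with at least `r` fixed points
is covered by the one-part partition `n¹`. -/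
theorem partial_cancellation_cycle (n r : ℕ) (hrn : r ≤ n) (hodd : Odd (n - r))
    (hcov : ∀ h : alternatingGroup (Fin (n - r)), h ≠ 1 → CoveredByNCycles (n - r) h) :
    ∀ g : alternatingGroup (Fin n), g ≠ 1 →
      r ≤ (Finset.univ.filter fun i => (↑g : Equiv.Perm (Fin n)) i = i).card →
      CoveredByNCycles n g :=
  partial_cancellation_cycle_general n r hodd hcov
end

section
/- Let a ≤ b be integers and let I₁ = [a₁,b₁], …, I_r = [a_r,b_r] be a packing of the interval [a,b], with a valid sequence S_i for each I_i. Let δ be the packing cycle for these valid sequences, and for 1 ≤ i ≤ r set β_i := (a_i, a_i+1, …, b_i)·(S_i), where (S_i) denotes the cycle determined by the sequence S_i. Then the permutations β₁,…,β_r have pairwise disjoint supports, and (a, a+1, …, b)·δ = β₁β₂⋯β_r. -/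
/-!
For nonempty `l₁`, `l₂` with `l₁ ++ l₂` duplicate-free, `formPerm (l₁ ++ l₂)` equals
`formPerm l₁ * formPerm l₂` up to the transposition of the last entries of `l₁` and `l₂` on the
right, or of their first entries on the left. Cut `(a, …, b)` below `A 0` and `δ` after `S 0`.
A valid sequence starts with its largest element, so the last entries of the two pieces of
`(a, …, b)` are the first entries of the two pieces of `δ`. The two transpositions therefore
cancel, and `(a, …, b)·δ = β₀ · (a, …, A 0 - 1)·δ'`, where `δ'` is the packing cycle of the
remaining blocks. Induction on the number of blocks finishes the proof.
-/

open Equiv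

/-- The ascending list `[a, a+1, …, b]` of the integers in the interval `[a, b]`. -/
def ascList (a b : ℤ) : List ℤ := (List.range (b + 1 - a).toNat).map (fun i => a + i)

/-- The descending list `[c-1, c-2, …, a]`. -/
def descList (a c : ℤ) : List ℤ := (List.range (c - a).toNat).map (fun i => c - 1 - i)

/-- `S` is a valid sequence for the interval `[c, d]`: its first term is `d` and every
element of `[c, d]` appears in it exactly once (hence it has `1 + d - c` terms). -/
def ValidSeq (c d : ℤ) (S : List ℤ) : Prop :=
  S.head? = some d ∧ S.Nodup ∧ ∀ z : ℤ, z ∈ S ↔ z ∈ Finset.Icc c d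

namespace List

variable {α : Type*} [DecidableEq α]

theorem formPerm_cons_append_cons {x y : α} {t s : List α} (hl : (x :: t ++ y :: s).Nodup) :
    formPerm (x :: t ++ y :: s) = Equiv.swap x y * formPerm (x :: t) * formPerm (y :: s) := by
  induction t generalizing x with
  | nil => simp [formPerm_cons_cons]
  | cons z t ih =>
    have hxyz : x ≠ z ∧ x ≠ y ∧ z ≠ y := by simp_all
    rw [show x :: z :: t ++ y :: s = x :: z :: (t ++ y :: s) from rfl, formPerm_cons_cons,
      ← cons_append, ih hl.of_cons, formPerm_cons_cons, ← mul_assoc, ← mul_assoc, ← mul_assoc]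
    congr 2
    ext w
    simp only [Perm.coe_mul, Function.comp_apply, swap_apply_def]
    grind

theorem formPerm_append_eq_swap_mul {l₁ l₂ : List α} (hl : (l₁ ++ l₂).Nodup)
    (h₁ : l₁ ≠ []) (h₂ : l₂ ≠ []) :
    formPerm (l₁ ++ l₂) = Equiv.swap (l₁.head h₁) (l₂.head h₂) * formPerm l₁ * formPerm l₂ := by
  obtain ⟨y, s, rfl⟩ := exists_cons_of_ne_nil h₂
  obtain ⟨x, t, rfl⟩ := exists_cons_of_ne_nil h₁
  exact formPerm_cons_append_cons hl

theorem formPerm_append_eq_mul_swap {l₁ l₂ : List α} (hl : (l₁ ++ l₂).Nodup)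
    (h₁ : l₁ ≠ []) (h₂ : l₂ ≠ []) :
    formPerm (l₁ ++ l₂) =
      formPerm l₁ * formPerm l₂ * Equiv.swap (l₁.getLast h₁) (l₂.getLast h₂) := by
  have hr : (l₂.reverse ++ l₁.reverse).Nodup := by rwa [← reverse_append, nodup_reverse]
  have key := formPerm_append_eq_swap_mul hr (by simpa using h₂) (by simpa using h₁)
  rw [← reverse_append, formPerm_reverse, formPerm_reverse, formPerm_reverse, head_reverse,
    head_reverse, inv_eq_iff_eq_inv] at key
  rw [key, mul_inv_rev, mul_inv_rev, swap_inv, inv_inv, inv_inv, Equiv.swap_comm, mul_assoc]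

theorem formPerm_append_mul_formPerm_append {u₁ u₂ v₁ v₂ : List α} (hu : (u₁ ++ u₂).Nodup)
    (hv : (v₂ ++ v₁).Nodup) (h₁ : u₁.getLast? = v₁.head?) (h₂ : u₂.getLast? = v₂.head?) :
    formPerm (u₁ ++ u₂) * formPerm (v₂ ++ v₁) =
      formPerm u₁ * formPerm u₂ * (formPerm v₂ * formPerm v₁) := by
  rcases eq_or_ne u₁ [] with rfl | hu₁
  · obtain rfl : v₁ = [] := head?_eq_none_iff.mp h₁.symm
    simp
  rcases eq_or_ne u₂ [] with rfl | hu₂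
  · obtain rfl : v₂ = [] := head?_eq_none_iff.mp h₂.symm
    simp
  have hv₁ : v₁ ≠ [] := fun h => hu₁ (getLast?_eq_none_iff.mp (h₁.trans (by simp [h])))
  have hv₂ : v₂ ≠ [] := fun h => hu₂ (getLast?_eq_none_iff.mp (h₂.trans (by simp [h])))
  rw [getLast?_eq_some_getLast hu₁, head?_eq_some_head hv₁, Option.some_inj] at h₁
  rw [getLast?_eq_some_getLast hu₂, head?_eq_some_head hv₂, Option.some_inj] at h₂
  rw [formPerm_append_eq_mul_swap hu hu₁ hu₂, formPerm_append_eq_swap_mul hv hv₂ hv₁, h₁, h₂,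
    Equiv.swap_comm]
  simp only [mul_assoc, swap_mul_self_mul]

theorem formPerm_disjoint {l l' : List α} (h : l.Disjoint l') :
    (formPerm l).Disjoint (formPerm l') := fun x => by
  by_cases hx : x ∈ l
  · exact Or.inr (formPerm_apply_of_notMem fun hx' => h hx hx')
  · exact Or.inl (formPerm_apply_of_notMem hx)

end List

open Finset

section IntervalLists

variable {a b c z : ℤ}

theorem ascList_eq_map (a b : ℤ) :
    ascList a b = (List.range (b + 1 - a).toNat).map (fun i : ℕ => a + i) :=
  (congrArg _ (List.flatMap_pure_eq_map _ _)).trans List.map_map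

theorem mem_ascList : z ∈ ascList a b ↔ z ∈ Icc a b := by
  simp only [ascList_eq_map, List.mem_map, List.mem_range, mem_Icc]
  constructor
  · rintro ⟨i, hi, rfl⟩
    omega
  · rintro ⟨h₁, h₂⟩
    exact ⟨(z - a).toNat, by omega, by omega⟩

theorem nodup_ascList (a b : ℤ) : (ascList a b).Nodup := by
  rw [ascList_eq_map]
  exact List.nodup_range.map fun i j h => by simpa using h

theorem ascList_append_ascList (hac : a ≤ c) (hcb : c ≤ b + 1) :
    ascList a (c - 1) ++ ascList c b = ascList a b := by
  obtain ⟨m, hm⟩ : ∃ m : ℕ, c = a + m := ⟨(c - a).toNat, by omega⟩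
  obtain ⟨n, hn⟩ : ∃ n : ℕ, b + 1 = c + n := ⟨(b + 1 - c).toNat, by omega⟩
  have h₁ : (c - 1 + 1 - a).toNat = m := by omega
  have h₂ : (b + 1 - c).toNat = n := by omega
  have h₃ : (b + 1 - a).toNat = m + n := by omega
  simp only [ascList_eq_map, h₁, h₂, h₃, List.range_add, List.map_append, List.map_map]
  congr 2
  ext i
  simp only [Function.comp_apply]
  push_cast
  omega

theorem ascList_self (a : ℤ) : ascList a a = [a] := by
  simp [ascList_eq_map]

theorem getLast?_ascList (hab : a ≤ b) : (ascList a b).getLast? = some b := by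
  rw [← ascList_append_ascList hab (by omega), ascList_self, List.getLast?_append]
  rfl

theorem descList_add_one (a b : ℤ) : descList a (b + 1) = (ascList a b).reverse := by
  have hmap : descList a (b + 1) = (List.range (b + 1 - a).toNat).map (fun i : ℕ => b - i) :=
    (congrArg _ (List.flatMap_pure_eq_map _ _)).trans (by simp [List.map_map, Function.comp_def])
  rw [hmap, ascList_eq_map, ← List.map_reverse, List.range_eq_range', List.reverse_range',
    List.map_map, ← List.range_eq_range']
  refine List.map_congr_left fun i hi => ?_
  rw [List.mem_range] at hi
  simp only [Function.comp_apply]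
  omega

end IntervalLists

/-- `ValidSeq` extended to empty intervals: for `c ≤ d` the head condition reads `S.head? = some d`,
and for `d < c` it forces `S = []`. -/
def ValidSeqOrNil (c d : ℤ) (S : List ℤ) : Prop :=
  S.head? = (ascList c d).getLast? ∧ S.Nodup ∧ ∀ z : ℤ, z ∈ S ↔ z ∈ Icc c d

/-- The paper's `βᵢ = (c, c + 1, …, d)·(S)`. -/
def blockPerm (c d : ℤ) (S : List ℤ) : Perm ℤ := (ascList c d).formPerm * S.formPerm

section Blocks

variable {a b c d : ℤ} {S S₁ S₂ : List ℤ}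

theorem ValidSeq.validSeqOrNil (hS : ValidSeq c d S) (hcd : c ≤ d) : ValidSeqOrNil c d S :=
  ⟨hS.1.trans (getLast?_ascList hcd).symm, hS.2⟩

theorem validSeqOrNil_reverse_ascList (a b : ℤ) : ValidSeqOrNil a b (ascList a b).reverse :=
  ⟨List.head?_reverse, List.nodup_reverse.mpr (nodup_ascList a b),
    fun _ => List.mem_reverse.trans mem_ascList⟩

theorem blockPerm_reverse_ascList (a b : ℤ) : blockPerm a b (ascList a b).reverse = 1 := by
  rw [blockPerm, List.formPerm_reverse, mul_inv_cancel]

theorem disjoint_of_subset_Icc {l₁ l₂ : List ℤ} (h₁ : ∀ z ∈ l₁, z ∈ Icc a b)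
    (h₂ : ∀ z ∈ l₂, z ∈ Icc c d) (hbc : b < c) : l₁.Disjoint l₂ := fun z hz₁ hz₂ => by
  have := mem_Icc.mp (h₁ z hz₁)
  have := mem_Icc.mp (h₂ z hz₂)
  omega

theorem disjoint_blockPerm (h₁ : ∀ z, z ∈ S₁ ↔ z ∈ Icc a b) (h₂ : ∀ z, z ∈ S₂ ↔ z ∈ Icc c d)
    (hbc : b < c) : (blockPerm a b S₁).Disjoint (blockPerm c d S₂) := by
  have hu₁ : ∀ z ∈ ascList a b, z ∈ Icc a b := fun _ => mem_ascList.1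
  have hu₂ : ∀ z ∈ ascList c d, z ∈ Icc c d := fun _ => mem_ascList.1
  have hv₁ : ∀ z ∈ S₁, z ∈ Icc a b := fun z => (h₁ z).1
  have hv₂ : ∀ z ∈ S₂, z ∈ Icc c d := fun z => (h₂ z).1
  exact ((List.formPerm_disjoint (disjoint_of_subset_Icc hu₁ hu₂ hbc)).mul_right
      (List.formPerm_disjoint (disjoint_of_subset_Icc hu₁ hv₂ hbc))).mul_left
    ((List.formPerm_disjoint (disjoint_of_subset_Icc hv₁ hu₂ hbc)).mul_right
      (List.formPerm_disjoint (disjoint_of_subset_Icc hv₁ hv₂ hbc)))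

theorem ValidSeqOrNil.append (h₁ : ValidSeqOrNil a (c - 1) S₁) (h₂ : ValidSeqOrNil c b S₂)
    (hac : a ≤ c) (hcb : c ≤ b + 1) : ValidSeqOrNil a b (S₂ ++ S₁) := by
  refine ⟨?_, h₂.2.1.append h₁.2.1 ?_, fun z => ?_⟩
  · rw [← ascList_append_ascList hac hcb, List.getLast?_append, List.head?_append, h₁.1, h₂.1]
  · exact (disjoint_of_subset_Icc (fun z => (h₁.2.2 z).1) (fun z => (h₂.2.2 z).1) (by omega)).symm
  · simp only [List.mem_append, h₁.2.2, h₂.2.2, mem_Icc]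
    omega

theorem blockPerm_append (h₁ : ValidSeqOrNil a (c - 1) S₁) (h₂ : ValidSeqOrNil c b S₂)
    (hac : a ≤ c) (hcb : c ≤ b + 1) :
    blockPerm a b (S₂ ++ S₁) = blockPerm c b S₂ * blockPerm a (c - 1) S₁ := by
  have hlow : ∀ z ∈ ascList a (c - 1), z ∈ Icc a (c - 1) := fun z => mem_ascList.1
  have hcomm : Commute (ascList a (c - 1)).formPerm (blockPerm c b S₂) :=
    ((List.formPerm_disjoint
        (disjoint_of_subset_Icc hlow (fun z => mem_ascList.1) (by omega))).mul_right
      (List.formPerm_disjoint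
        (disjoint_of_subset_Icc hlow (fun z => (h₂.2.2 z).1) (by omega)))).commute
  have hnodup : (ascList a (c - 1) ++ ascList c b).Nodup := by
    rw [ascList_append_ascList hac hcb]
    exact nodup_ascList a b
  rw [blockPerm, ← ascList_append_ascList hac hcb, List.formPerm_append_mul_formPerm_append
    hnodup (h₁.append h₂ hac hcb).2.1 h₁.1.symm h₂.1.symm]
  calc _ = (ascList a (c - 1)).formPerm * blockPerm c b S₂ * S₁.formPerm := by
          simp only [blockPerm, mul_assoc]
    _ = blockPerm c b S₂ * blockPerm a (c - 1) S₁ := by rw [hcomm.eq, mul_assoc]; rfl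

end Blocks

/-- `formPerm (packingSeq a e S)` is the packing cycle `δ` when `e` is the lower end of the last
block. -/
def packingSeq {r : ℕ} (a e : ℤ) (S : Fin r → List ℤ) : List ℤ :=
  (List.ofFn S).flatten ++ descList a e

theorem packingSeq_succ {n : ℕ} (a e : ℤ) (S : Fin (n + 1) → List ℤ) :
    packingSeq a e S = S 0 ++ packingSeq a e (fun i => S i.succ) := by
  simp [packingSeq, List.ofFn_succ]

/-- The blocks `[A i, B i]` tile `[e, b]` from the top down (so `e = b + 1` when `r = 0`). -/
structure IsPacking {r : ℕ} (e b : ℤ) (A B : Fin r → ℤ) : Prop where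
  le : ∀ i, A i ≤ B i
  top : ∀ h : 0 < r, B ⟨0, h⟩ = b
  chain : ∀ i : ℕ, ∀ hi : i + 1 < r, B ⟨i + 1, hi⟩ = A ⟨i, by omega⟩ - 1
  bot : ∀ h : 0 < r, A ⟨r - 1, by omega⟩ = e
  nil : r = 0 → e = b + 1

namespace IsPacking

variable {r n : ℕ} {a b e : ℤ}

theorem tail {A B : Fin (n + 1) → ℤ} (hP : IsPacking e b A B) :
    IsPacking e (A 0 - 1) (fun i => A i.succ) (fun i => B i.succ) where
  le i := hP.le i.succ
  top _ := hP.chain 0 (by omega)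
  chain i hi := hP.chain (i + 1) (by omega)
  bot hn := (congrArg A (Fin.ext (by simp; omega))).trans (hP.bot n.succ_pos)
  nil hn := by
    subst hn
    rw [← hP.bot (Nat.succ_pos 0)]
    simp

theorem top_zero {A B : Fin (n + 1) → ℤ} (hP : IsPacking e b A B) : B 0 = b :=
  hP.top n.succ_pos

theorem bot_le_top_add_one {A B : Fin r → ℤ} (hP : IsPacking e b A B) : e ≤ b + 1 := by
  induction r generalizing b with
  | zero => exact (hP.nil rfl).le
  | succ n ih =>
    have := ih hP.tail
    have := hP.le 0
    have := hP.top_zero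
    omega

theorem bot_le_A_zero {A B : Fin (n + 1) → ℤ} (hP : IsPacking e b A B) : e ≤ A 0 := by
  simpa using hP.tail.bot_le_top_add_one

theorem A_zero_le_top_add_one {A B : Fin (n + 1) → ℤ} (hP : IsPacking e b A B) :
    A 0 ≤ b + 1 := by
  have := hP.le 0
  rw [hP.top_zero] at this
  omega

theorem validSeqOrNil_zero {A B : Fin (n + 1) → ℤ} {S : Fin (n + 1) → List ℤ}
    (hP : IsPacking e b A B) (hS : ∀ i, ValidSeq (A i) (B i) (S i)) :
    ValidSeqOrNil (A 0) b (S 0) :=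
  hP.top_zero ▸ (hS 0).validSeqOrNil (hP.le 0)

theorem B_lt_A_of_lt {A B : Fin r → ℤ} (hP : IsPacking e b A B) {i j : Fin r} (hij : i < j) :
    B j < A i := by
  obtain ⟨i, hi⟩ := i
  obtain ⟨j, hj⟩ := j
  rw [Fin.mk_lt_mk] at hij
  induction j with
  | zero => omega
  | succ j ih =>
    have hstep := hP.chain j hj
    rcases Nat.lt_succ_iff_lt_or_eq.mp hij with h | rfl
    · have := ih (by omega) h
      have := hP.le ⟨j, by omega⟩
      omega
    · omega

variable {A B : Fin r → ℤ} {S : Fin r → List ℤ}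

theorem validSeqOrNil_packingSeq (hP : IsPacking e b A B) (hae : a ≤ e)
    (hS : ∀ i, ValidSeq (A i) (B i) (S i)) : ValidSeqOrNil a b (packingSeq a e S) := by
  induction r generalizing b with
  | zero =>
    rw [hP.nil rfl, packingSeq, List.ofFn_zero, List.flatten_nil, List.nil_append,
      descList_add_one]
    exact validSeqOrNil_reverse_ascList a b
  | succ n ih =>
    rw [packingSeq_succ]
    exact (ih hP.tail fun i => hS i.succ).append (hP.validSeqOrNil_zero hS)
      (hae.trans hP.bot_le_A_zero) hP.A_zero_le_top_add_one

theorem blockPerm_packingSeq (hP : IsPacking e b A B) (hae : a ≤ e)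
    (hS : ∀ i, ValidSeq (A i) (B i) (S i)) :
    blockPerm a b (packingSeq a e S) = (List.ofFn fun i => blockPerm (A i) (B i) (S i)).prod := by
  induction r generalizing b with
  | zero =>
    rw [hP.nil rfl, packingSeq, List.ofFn_zero, List.flatten_nil, List.nil_append,
      descList_add_one, blockPerm_reverse_ascList, List.ofFn_zero, List.prod_nil]
  | succ n ih =>
    have hS' : ∀ i : Fin n, ValidSeq (A i.succ) (B i.succ) (S i.succ) := fun i => hS i.succ
    rw [packingSeq_succ, blockPerm_append (hP.tail.validSeqOrNil_packingSeq hae hS')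
      (hP.validSeqOrNil_zero hS) (hae.trans hP.bot_le_A_zero) hP.A_zero_le_top_add_one,
      ih hP.tail hS', List.ofFn_succ, List.prod_cons, hP.top_zero]

end IsPacking

/-- **The packing-cycle lemma.**
Suppose `I₁ = [A 0, B 0], …, I_r = [A (r-1), B (r-1)]` is a packing of `[a, b]` with valid
sequences `S 0, …, S (r-1)`, and let `δ` be the packing cycle, i.e. the cycle obtained by
juxtaposing the `S i` in order followed by the free space `[a, A (r-1) - 1]` in decreasing
order.  Set `βᵢ := (A i, A i + 1, …, B i)·(S i)`.  Then the `βᵢ` are disjoint permutations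
and `(a, a+1, …, b)·δ = β₀ β₁ ⋯ β_{r-1}`. -/
theorem packing_cycle (a b : ℤ) (r : ℕ) (hr : 0 < r)
    (A B : Fin r → ℤ) (hAB : ∀ i, A i ≤ B i)
    (hB0 : B ⟨0, hr⟩ = b)
    (hchain : ∀ i : ℕ, ∀ hi : i + 1 < r, B ⟨i + 1, hi⟩ = A ⟨i, by omega⟩ - 1)
    (hfree : a ≤ A ⟨r - 1, by omega⟩)
    (S : Fin r → List ℤ) (hS : ∀ i, ValidSeq (A i) (B i) (S i)) :
    (∀ i j : Fin r, i ≠ j →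
      ((ascList (A i) (B i)).formPerm * (S i).formPerm).Disjoint
        ((ascList (A j) (B j)).formPerm * (S j).formPerm)) ∧
    (ascList a b).formPerm *
        ((List.ofFn S).flatten ++ descList a (A ⟨r - 1, by omega⟩)).formPerm =
      (List.ofFn (fun i => (ascList (A i) (B i)).formPerm * (S i).formPerm)).prod := by
  have hP : IsPacking (A ⟨r - 1, by omega⟩) b A B :=
    ⟨hAB, fun _ => hB0, hchain, fun _ => rfl, by omega⟩
  refine ⟨fun i j hij => ?_, hP.blockPerm_packingSeq hfree hS⟩
  have hmem k : ∀ z, z ∈ S k ↔ z ∈ Icc (A k) (B k) := (hS k).2.2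
  rcases hij.lt_or_gt with h | h
  · exact (disjoint_blockPerm (hmem j) (hmem i) (hP.B_lt_A_of_lt h)).symm
  · exact disjoint_blockPerm (hmem i) (hmem j) (hP.B_lt_A_of_lt h)
end

section
/- Let X be a finite set and γ, δ ∈ Sym(X). Suppose x, y are distinct elements of X such that: (a) δ fixes neither x nor y; (b) γ(x) belongs to the orbit of x under γδ; and (c) both y and γ(y) are fixed by γδ. Then there exists δ' ∈ Sym(X), conjugate to δ by a transposition, such that γδ' agrees with γδ outside the set O ∪ {y, γ(y)}, where O is the γδ-orbit of x, and O ∪ {y, γ(y)} forms a single orbit of γδ' of size 2 + |O|. -/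
/-!
If `f b = b` and `a ≠ b`, then `f * swap a b` sends `a ↦ b ↦ f a` and agrees with `f` elsewhere:
it splices the fixed point `b` into the cycle of `a`. Since `δ (γ y) = y`, conjugating `δ` by
`swap x y` gives `γ * δ' = γ * δ * swap (δ⁻¹ x) (γ y) * swap x y`. The point `δ⁻¹ x` lies on the
`γ * δ`-cycle of `x`, because `γ * δ` maps it to `γ x`; so the two transpositions splice the
fixed points `γ y` and `y` into that cycle, and nothing else changes.
-/

open Equiv

namespace Equiv.Perm

variable {α : Type*}

theorem SameCycle.of_invariant {f : Perm α} {p : α → Prop} (hp : ∀ z, p (f z) ↔ p z)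
    {a b : α} (h : f.SameCycle a b) (ha : p a) : p b := by
  obtain ⟨n, rfl⟩ := h
  simpa using ((f.subtypePerm hp ^ n) ⟨a, ha⟩).2

variable [DecidableEq α]

theorem sameCycle_mul_swap_iff {f : Perm α} {a b z : α} (hb : f b = b) (hab : a ≠ b) :
    (f * swap a b).SameCycle a z ↔ f.SameCycle a z ∨ z = b := by
  set g := f * swap a b
  have hga : g a = b := by simp [g, hb]
  have hgb : g b = f a := by simp [g]
  have hg : ∀ w, w ≠ a → w ≠ b → g w = f w := fun w hwa hwb => by
    simp [g, swap_apply_of_ne_of_ne hwa hwb]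
  have hfw : ∀ {w}, w ≠ b → f w ≠ b := fun hw h => hw (f.injective (h.trans hb.symm))
  constructor
  · refine fun h => h.of_invariant (p := fun w => f.SameCycle a w ∨ w = b) (fun w => ?_)
      (.inl .rfl)
    by_cases hwa : w = a
    · simp [hwa, hga, SameCycle.rfl]
    by_cases hwb : w = b
    · simp [hwb, hgb, SameCycle.rfl]
    simp [hg w hwa hwb, hfw hwb, hwb]
  · rintro (h | rfl)
    · refine (h.of_invariant (p := fun w => g.SameCycle a w ∧ w ≠ b) (fun w => ?_) ⟨.rfl, hab⟩).1
      by_cases hwa : w = a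
      · subst hwa
        exact iff_of_true ⟨by rw [← hgb, ← hga]; simp [SameCycle.rfl], hfw hab⟩ ⟨.rfl, hab⟩
      by_cases hwb : w = b
      · rw [hwb, hb]
      have hgw : g w ≠ b := hg w hwa hwb ▸ hfw hwb
      simp [← hg w hwa hwb, hgw, hwb]
    · exact ⟨1, by simpa using hga⟩

theorem setOf_sameCycle_mul_swap_mul_swap {f : Perm α} {a p b c : α} (hb : f b = b)
    (hc : f c = c) (hbc : b ≠ c) (hap : f.SameCycle a p) (hab : a ≠ b) (hac : a ≠ c) :
    {z | (f * swap p c * swap a b).SameCycle a z} = {z | f.SameCycle a z} ∪ {b, c} := by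
  have hpb : p ≠ b := by rintro rfl; exact hab (hap.eq_of_right hb)
  have hpc : p ≠ c := by rintro rfl; exact hac (hap.eq_of_right hc)
  have hb' : (f * swap p c) b = b := by simp [swap_apply_of_ne_of_ne hpb.symm hbc, hb]
  have hpa : (f * swap p c).SameCycle p a := (sameCycle_mul_swap_iff hc hpc).2 (.inl hap.symm)
  ext z
  have hcycle : (f * swap p c).SameCycle a z ↔ f.SameCycle a z ∨ z = c :=
    calc _ ↔ (f * swap p c).SameCycle p z := ⟨hpa.trans, hpa.symm.trans⟩
      _ ↔ f.SameCycle p z ∨ z = c := sameCycle_mul_swap_iff hc hpc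
      _ ↔ _ := or_congr_left ⟨hap.trans, hap.symm.trans⟩
  simp only [Set.mem_ofPred_eq, Set.mem_union, Set.mem_insert_iff, Set.mem_singleton_iff,
    sameCycle_mul_swap_iff hb' hab, hcycle]
  tauto

end Equiv.Perm

theorem rebuild_long_cycles_general {X : Type*} [Fintype X] [DecidableEq X]
    (γ δ : Equiv.Perm X) (x y : X) (hxy : x ≠ y)
    (ha2 : δ y ≠ y)
    (hb : (γ * δ).SameCycle x (γ x))
    (hc1 : (γ * δ) y = y) (hc2 : (γ * δ) (γ y) = γ y) :
    ∃ δ' : Equiv.Perm X,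
      (∃ u v : X, u ≠ v ∧ δ' = Equiv.swap u v * δ * Equiv.swap u v) ∧
      (∀ z : X, z ∉ ({w | (γ * δ).SameCycle x w} ∪ {y, γ y} : Set X) →
        (γ * δ') z = (γ * δ) z) ∧
      ({w | (γ * δ').SameCycle x w} : Set X) =
        ({w | (γ * δ).SameCycle x w} ∪ {y, γ y} : Set X) ∧
      (({w | (γ * δ).SameCycle x w} ∪ {y, γ y} : Set X)).ncard =
        2 + ({w | (γ * δ).SameCycle x w} : Set X).ncard := by
  have hδγy : δ (γ y) = y := γ.injective hc2
  have hγy : γ y ≠ y := fun h => ha2 (γ.injective (hc1.trans h.symm))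
  have hxγy : x ≠ γ y := by
    rintro rfl
    exact hγy (γ.injective (hb.eq_of_left hc2)).symm
  have hp : (γ * δ).SameCycle x (δ⁻¹ x) := by
    have h : (γ * δ) (δ⁻¹ x) = γ x := by simp
    exact hb.trans (h ▸ Perm.sameCycle_apply_right.2 .rfl).symm
  have hδ' : γ * (swap x y * δ * swap x y) = γ * δ * swap (δ⁻¹ x) (γ y) * swap x y := by
    rw [swap_mul_eq_mul_swap, Perm.inv_eq_iff_eq.2 hδγy.symm]
    simp only [mul_assoc]
  refine ⟨_, ⟨x, y, hxy, rfl⟩, fun z hz => ?_,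
    hδ' ▸ Perm.setOf_sameCycle_mul_swap_mul_swap hc1 hc2 hγy.symm hp hxy hxγy, ?_⟩
  · simp only [Set.mem_union, Set.mem_insert_iff, Set.mem_singleton_iff, not_or] at hz
    obtain ⟨hzO, hzy, hzγy⟩ := hz
    have hzx : z ≠ x := by rintro rfl; exact hzO .rfl
    have hzp : z ≠ δ⁻¹ x := by rintro rfl; exact hzO hp
    rw [hδ', Perm.mul_apply, swap_apply_of_ne_of_ne hzx hzy, Perm.mul_apply,
      swap_apply_of_ne_of_ne hzp hzγy]
  · have hyO : y ∉ {w | (γ * δ).SameCycle x w} := fun h => hxy (h.eq_of_right hc1)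
    have hγyO : γ y ∉ {w | (γ * δ).SameCycle x w} := fun h => hxγy (h.eq_of_right hc2)
    rw [Set.ncard_union_eq (by simp [hyO, hγyO]), Set.ncard_pair hγy.symm, add_comm]

/-- **Rebuilding long cycles.**
Let `γ, δ` be permutations of a finite set `X` and let `x ≠ y` in `X` satisfy:
(a) `δ` fixes neither `x` nor `y`; (b) `γ x` lies in the `γδ`-orbit of `x`; and
(c) `y` and `γ y` are both fixed by `γδ`.  Then there is a permutation `δ'`, conjugate to
`δ` by a transposition, such that `γδ'` agrees with `γδ` outside `O ∪ {y, γ y}` (where `O`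
is the `γδ`-orbit of `x`), and `O ∪ {y, γ y}` forms a single `γδ'`-orbit of size
`2 + |O|`. -/
theorem rebuild_long_cycles {X : Type*} [Fintype X] [DecidableEq X]
    (γ δ : Equiv.Perm X) (x y : X) (hxy : x ≠ y)
    (ha1 : δ x ≠ x) (ha2 : δ y ≠ y)
    (hb : (γ * δ).SameCycle x (γ x))
    (hc1 : (γ * δ) y = y) (hc2 : (γ * δ) (γ y) = γ y) :
    ∃ δ' : Equiv.Perm X,
      (∃ u v : X, u ≠ v ∧ δ' = Equiv.swap u v * δ * Equiv.swap u v) ∧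
      (∀ z : X, z ∉ ({w | (γ * δ).SameCycle x w} ∪ {y, γ y} : Set X) →
        (γ * δ') z = (γ * δ) z) ∧
      ({w | (γ * δ').SameCycle x w} : Set X) =
        ({w | (γ * δ).SameCycle x w} ∪ {y, γ y} : Set X) ∧
      (({w | (γ * δ).SameCycle x w} ∪ {y, γ y} : Set X)).ncard =
        2 + ({w | (γ * δ).SameCycle x w} : Set X).ncard :=
  rebuild_long_cycles_general γ δ x y hxy ha2 hb hc1 hc2
end

section
/- For every ε > 0 there exists N = N₁(ε) > 0 such that for all n ≥ N, if a₁, a₂, …, a_m are pairwise distinct positive integers with a₁ + a₂ + ⋯ + a_m = n, then a₁·a₂⋯a_m < e^{εn}. -/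
open Filter Asymptotics Real
open scoped Finset

/-!
Distinct positive integers with sum `n` are at most `√(2n)` in number, since the `m` smallest
possible ones already sum to `m(m+1)/2`; each is at most `n`, so their product is at most
`n ^ √(2n) = exp (√(2n) log n)`, and `√(2n) log n = o(n)`.
-/

theorem Finset.card_mul_card_add_one_le_two_mul_sum (S : Finset ℕ) (hS : 0 ∉ S) :
    #S * (#S + 1) ≤ 2 * ∑ x ∈ S, x := by
  induction S using Finset.induction_on_max with
  | empty => simp
  | insert a s hlt ih =>
    have has : a ∉ s := fun h => (hlt a h).false
    have ha0 : 0 < a := Nat.pos_of_ne_zero fun h => hS (h ▸ Finset.mem_insert_self a s)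
    have hsub : s ⊆ Finset.Ioo 0 a := fun x hx =>
      Finset.mem_Ioo.2 ⟨Nat.pos_of_ne_zero fun h => hS (h ▸ Finset.mem_insert_of_mem hx), hlt x hx⟩
    have hcard : #s + 1 ≤ a := by
      have := Finset.card_le_card hsub
      rw [Nat.card_Ioo] at this
      omega
    rw [Finset.card_insert_of_notMem has, Finset.sum_insert has]
    nlinarith [ih fun h => hS (Finset.mem_insert_of_mem h)]

theorem card_mul_card_add_one_le_two_mul_sum_of_injective {ι : Type*} [Fintype ι] {a : ι → ℕ}
    (ha : Function.Injective a) (hpos : ∀ i, 0 < a i) :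
    Fintype.card ι * (Fintype.card ι + 1) ≤ 2 * ∑ i, a i := by
  classical
  have h0 : 0 ∉ Finset.univ.image a := by simpa using fun i => (hpos i).ne'
  simpa [Finset.card_image_of_injective _ ha, Finset.sum_image fun i _ j _ h => ha h]
    using Finset.card_mul_card_add_one_le_two_mul_sum _ h0

theorem isLittleO_sqrt_two_mul_mul_log_atTop :
    (fun x : ℝ => √(2 * x) * log x) =o[atTop] id := by
  have hsqrt : (fun x : ℝ => √(2 * x)) =O[atTop] (fun x => √x) := by
    simpa only [Real.sqrt_mul zero_le_two] using isBigO_const_mul_self √2 (fun x : ℝ => √x) atTop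
  have hlog : log =o[atTop] fun x => √x := by
    simpa only [← Real.sqrt_eq_rpow] using isLittleO_log_rpow_atTop one_half_pos
  refine (hsqrt.mul_isLittleO hlog).congr' EventuallyEq.rfl ?_
  filter_upwards [eventually_ge_atTop 0] with x hx using Real.mul_self_sqrt hx

theorem eventually_sqrt_two_mul_mul_log_lt {ε : ℝ} (hε : 0 < ε) :
    ∀ᶠ x : ℝ in atTop, √(2 * x) * log x < ε * x := by
  filter_upwards [isLittleO_sqrt_two_mul_mul_log_atTop.def (half_pos hε), eventually_gt_atTop 0]
    with x hle hx
  rw [Real.norm_eq_abs, Real.norm_eq_abs, id, abs_of_pos hx] at hle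
  linarith [le_abs_self (√(2 * x) * log x), mul_pos hε hx]

/-- **Products of distinct positive integers with fixed sum are subexponential.**
For all `ε > 0` there exists `N > 0` such that if `n ≥ N` and `a₁, …, a_m` are pairwise
distinct positive integers with `a₁ + ⋯ + a_m = n`, then `a₁ ⋯ a_m < e^{εn}`. -/
theorem prod_distinct_lt_exp (ε : ℝ) (hε : 0 < ε) :
    ∃ N : ℕ, 0 < N ∧ ∀ n : ℕ, N ≤ n → ∀ m : ℕ, ∀ a : Fin m → ℕ,
      Function.Injective a → (∀ i, 0 < a i) → (∑ i, a i) = n →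
      ((∏ i, a i : ℕ) : ℝ) < Real.exp (ε * n) := by
  obtain ⟨N, hN⟩ := eventually_atTop.1
    (tendsto_natCast_atTop_atTop.eventually (eventually_sqrt_two_mul_mul_log_lt hε))
  refine ⟨N + 1, N.succ_pos, fun n hn m a ha hpos hsum => ?_⟩
  have hn : (1 : ℝ) ≤ n := by exact_mod_cast (by omega : 1 ≤ n)
  have hm : (m : ℝ) ≤ √(2 * n) := by
    have hcard := card_mul_card_add_one_le_two_mul_sum_of_injective ha hpos
    rw [Fintype.card_fin, hsum] at hcard
    rw [Real.le_sqrt (by positivity) (by positivity)]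
    exact_mod_cast (by nlinarith : m ^ 2 ≤ 2 * n)
  have hprod : ∏ i, a i ≤ n ^ m := by
    simpa using Finset.prod_le_pow_card Finset.univ a n fun i _ => hsum ▸ Finset.single_le_sum
      (fun j _ => Nat.zero_le (a j)) (Finset.mem_univ i)
  calc ((∏ i, a i : ℕ) : ℝ) ≤ (n : ℝ) ^ m := by exact_mod_cast hprod
    _ = exp (m * log n) := by rw [exp_nat_mul, exp_log (by linarith)]
    _ ≤ exp (√(2 * n) * log n) := exp_le_exp.2 (mul_le_mul_of_nonneg_right hm (log_nonneg hn))
    _ < exp (ε * n) := exp_lt_exp.2 (hN n (by omega))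
end

section
/- Let m ≥ 3 be an odd integer and let h ∈ S_m be an m-cycle. Then every permutation σ ∈ S_m satisfying σhσ⁻¹ = h⁻¹ is an even permutation if m ≡ 1 (mod 4), and is an odd permutation if m ≡ 3 (mod 4). -/
/-!
Fix `x`; every point is `h ^ k x`. If `σ` inverts `h` then so does `ρ := h ^ (-a) * σ`, where
`σ x = h ^ a x`, and `ρ` fixes `x`, so `ρ (h ^ k x) = h ^ (-k) x`. A cycle of odd length is even,
so `sign σ = sign ρ`. Now `ρ` is an involution whose only fixed point is `x`: `h ^ k x` is fixed
iff `h ^ (2k) = 1`, which in odd order forces `h ^ k = 1`. Hence `ρ` is a product of `(m - 1) / 2`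
disjoint transpositions.
-/

namespace Equiv.Perm

variable {α : Type*} [Fintype α] [DecidableEq α] {h : Perm α}

theorem IsCycle.exists_zpow_apply_eq_of_support_eq_univ (hc : h.IsCycle)
    (hs : h.support = Finset.univ) (x y : α) : ∃ k : ℤ, (h ^ k) x = y :=
  hc.exists_zpow_eq (mem_support.mp (hs ▸ Finset.mem_univ x))
    (mem_support.mp (hs ▸ Finset.mem_univ y))

theorem IsCycle.eq_one_of_commute_of_apply_eq (hc : h.IsCycle) (hs : h.support = Finset.univ)
    {g : Perm α} (hg : Commute g h) {x : α} (hx : g x = x) : g = 1 := by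
  ext y
  obtain ⟨k, rfl⟩ := hc.exists_zpow_apply_eq_of_support_eq_univ hs x y
  rw [← mul_apply, (hg.zpow_right k).eq, mul_apply, hx, one_apply]

theorem IsCycle.sq_eq_one_of_semiconjBy_inv (hc : h.IsCycle) (hs : h.support = Finset.univ)
    {ρ : Perm α} (hρ : SemiconjBy ρ h h⁻¹) {x : α} (hx : ρ x = x) : ρ ^ 2 = 1 := by
  have hcomm : Commute (ρ ^ 2) h := by
    have := hρ.inv_right.mul_left hρ
    rwa [inv_inv, ← sq] at this
  exact hc.eq_one_of_commute_of_apply_eq hs hcomm (by rw [sq, mul_apply, hx, hx])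

theorem IsCycle.eq_of_semiconjBy_inv_of_apply_eq (hc : h.IsCycle) (hs : h.support = Finset.univ)
    (hodd : Odd (Fintype.card α)) {ρ : Perm α} (hρ : SemiconjBy ρ h h⁻¹) {x y : α}
    (hx : ρ x = x) (hy : ρ y = y) : y = x := by
  obtain ⟨k, rfl⟩ := hc.exists_zpow_apply_eq_of_support_eq_univ hs x y
  have hreflect : (h ^ (-k)) x = (h ^ k) x := by
    rw [← hy, ← mul_apply, (hρ.zpow_right k).eq, inv_zpow', mul_apply, hx]
  have hsq : h ^ (2 * k) = 1 := by
    refine hc.eq_one_of_commute_of_apply_eq hs (Commute.self_zpow h _).symm (x := x) ?_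
    rw [two_mul, zpow_add, mul_apply, ← hreflect, ← mul_apply, ← zpow_add, add_neg_cancel,
      zpow_zero, one_apply]
  have horder : orderOf h = Fintype.card α := by rw [hc.orderOf, hs, Finset.card_univ]
  have hcop : IsCoprime (orderOf h : ℤ) 2 := by
    rw [horder]
    exact_mod_cast Nat.isCoprime_iff_coprime.mpr (Nat.coprime_two_right.mpr hodd)
  have hk : h ^ k = 1 := orderOf_dvd_iff_zpow_eq_one.mp
    (hcop.dvd_of_dvd_mul_left (orderOf_dvd_iff_zpow_eq_one.mpr hsq))
  rw [hk, one_apply]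

theorem IsCycle.sign_eq_of_semiconjBy_inv (hc : h.IsCycle) (hs : h.support = Finset.univ)
    (hodd : Odd (Fintype.card α)) {σ : Perm α} (hσ : SemiconjBy σ h h⁻¹) :
    Perm.sign σ = (-1) ^ (Fintype.card α / 2) := by
  obtain ⟨x, -⟩ := hc.nonempty_support
  obtain ⟨a, ha⟩ := hc.exists_zpow_apply_eq_of_support_eq_univ hs x (σ x)
  set ρ := h ^ (-a) * σ with hρ_def
  have hρ : SemiconjBy ρ h h⁻¹ :=
    SemiconjBy.mul_left (Commute.self_zpow h _).symm.inv_right hσ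
  have hρx : ρ x = x := by
    rw [hρ_def, mul_apply, ← ha, ← mul_apply, ← zpow_add, neg_add_cancel, zpow_zero,
      one_apply]
  have hsign_h : Perm.sign h = 1 := by
    rw [hc.sign, hs, Finset.card_univ, hodd.neg_one_pow, neg_neg]
  have hfix : Fintype.card (Function.fixedPoints ρ) = 1 :=
    Fintype.card_eq_one_iff.mpr ⟨⟨x, hρx⟩, fun ⟨y, hy⟩ =>
      Subtype.ext (hc.eq_of_semiconjBy_inv_of_apply_eq hs hodd hρ hρx hy)⟩
  have hσρ : Perm.sign σ = Perm.sign ρ := by simp [hρ_def, hsign_h]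
  rw [hσρ, sign_of_pow_two_eq_one (hc.sq_eq_one_of_semiconjBy_inv hs hρ hρx), hfix]
  obtain ⟨t, ht⟩ := hodd
  congr 1
  omega

end Equiv.Perm

theorem sign_of_inverting_perm_general (m : ℕ) (hodd : Odd m)
    (h : Equiv.Perm (Fin m)) (hc : h.IsCycle) (hsupp : h.support.card = m) :
    ∀ σ : Equiv.Perm (Fin m), σ * h * σ⁻¹ = h⁻¹ →
      (m % 4 = 1 → Equiv.Perm.sign σ = 1) ∧ (m % 4 = 3 → Equiv.Perm.sign σ = -1) := by
  intro σ hσ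
  have hs : h.support = Finset.univ :=
    Finset.eq_univ_of_card _ (by rw [hsupp, Fintype.card_fin])
  have hsign : Equiv.Perm.sign σ = (-1) ^ (m / 2) := by
    simpa using hc.sign_eq_of_semiconjBy_inv hs (by simpa using hodd)
      (mul_inv_eq_iff_eq_mul.mp hσ)
  rw [hsign]
  exact ⟨fun hm => Even.neg_one_pow ⟨m / 4, by omega⟩,
    fun hm => Odd.neg_one_pow ⟨m / 4, by omega⟩⟩

/-- **Parity of permutations inverting a long cycle.**
Let `m ≥ 3` be odd and `h ∈ S_m` an `m`-cycle.  Any `σ ∈ S_m` with `σhσ⁻¹ = h⁻¹` is even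
if `m ≡ 1 (mod 4)` and odd if `m ≡ 3 (mod 4)`. -/
theorem sign_of_inverting_perm (m : ℕ) (hm : 3 ≤ m) (hodd : Odd m)
    (h : Equiv.Perm (Fin m)) (hc : h.IsCycle) (hsupp : h.support.card = m) :
    ∀ σ : Equiv.Perm (Fin m), σ * h * σ⁻¹ = h⁻¹ →
      (m % 4 = 1 → Equiv.Perm.sign σ = 1) ∧ (m % 4 = 3 → Equiv.Perm.sign σ = -1) :=
  sign_of_inverting_perm_general m hodd h hc hsupp
end
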